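/- Assume quasi-symmetry and μ(ℤ^N) = ℤ^k. Let δ ∈ ℝ^k, ṽ ∈ ℤ^N, and I ⊆ {1,…,N}. Then there exists w ∈ ℤ^N with μ(w) ∈ δ + ∇, w_i < ṽ_i for every i ∈ I and w_i = ṽ_i for every i ∉ I, if and only if δ ∈ μ(ṽ) − β_I − C_I + ∇. -/

import Mathlib

/-!
Writing `w = ṽ - 1_I - n` with `n ∈ ℕ^I` gives `μ w = μ ṽ - β_I - μ n`, so the forward direction
only needs `∇ = -∇`, i.e. `∑ β_i = 0`, and the converse amounts to finding, for `c ≥ 0` supported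
on `I` and `z ∈ ∇`, some `n ∈ ℕ^I` supported where `c` is with `μ (c - n) - z ∈ ∇`.

Quasi-symmetry lets us do this one line `L` at a time. On `L` the `β_j` are `r_j • e` with
`∑ r_j = 0`, so the part of `∇` along `L` is the interval of half-width `W / 4`, `W = ∑ |r_j|`,
and every `|r_j| ≤ W / 2`. If the target lies outside this window, then some `j` with `c_j > 0`
has `r_j` pointing towards it, and subtracting a suitable natural multiple of `r_j` lands inside.
-/

open Pointwise
open scoped Classical

lemma Finset.sum_eq_zero_of_sum_fiber_eq_zero {ι κ M : Type*} [Fintype ι] [AddCommMonoid M]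
    (g : ι → κ) (f : ι → M) (h : ∀ y, ∑ i ∈ univ.filter (fun i => g i = y), f i = 0) :
    ∑ i, f i = 0 := by
  rw [← Finset.sum_fiberwise_of_maps_to (t := univ.image g)
    (fun i _ => mem_image_of_mem g (mem_univ i))]
  exact sum_eq_zero fun y _ => h y

section Line

variable {ι : Type*} {A : Finset ι} {r : ι → ℝ}

lemma abs_le_sum_abs_div_two (hr : ∑ i ∈ A, r i = 0) {j : ι} (hj : j ∈ A) :
    |r j| ≤ (∑ i ∈ A, |r i|) / 2 := by
  have hrest : ∑ i ∈ A.erase j, r i = -r j := by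
    linarith [Finset.add_sum_erase A r hj]
  have := Finset.abs_sum_le_sum_abs r (A.erase j)
  rw [hrest, abs_neg] at this
  linarith [Finset.add_sum_erase A (fun i => |r i|) hj]

lemma abs_sum_half_mul_le (hr : ∑ i ∈ A, r i = 0) {t : ι → ℝ}
    (ht : ∀ i ∈ A, t i ∈ Set.Icc (0 : ℝ) 1) :
    |∑ i ∈ A, t i / 2 * r i| ≤ (∑ i ∈ A, |r i|) / 4 := by
  have hcentre : ∑ i ∈ A, t i / 2 * r i = ∑ i ∈ A, (t i / 2 - 1 / 4) * r i := by
    simp only [sub_mul, Finset.sum_sub_distrib, ← Finset.mul_sum, hr, mul_zero, sub_zero]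
  rw [hcentre, Finset.sum_div]
  refine (Finset.abs_sum_le_sum_abs _ _).trans (Finset.sum_le_sum fun i hi => ?_)
  have : |t i / 2 - 1 / 4| ≤ 1 / 4 := abs_le.2 ⟨by linarith [(ht i hi).1], by linarith [(ht i hi).2]⟩
  rw [abs_mul]
  nlinarith [abs_nonneg (r i)]

lemma exists_sum_half_mul_eq (hr : ∑ i ∈ A, r i = 0) {a : ℝ}
    (ha : |a| ≤ (∑ i ∈ A, |r i|) / 4) :
    ∃ s : ι → ℝ, (∀ i, s i ∈ Set.Icc (0 : ℝ) 1) ∧ ∑ i ∈ A, s i / 2 * r i = a := by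
  set W := ∑ i ∈ A, |r i|
  set l := 4 * a / W
  have hW : 0 ≤ W := Finset.sum_nonneg fun i _ => abs_nonneg (r i)
  have hl : |l| ≤ 1 := by
    rcases hW.eq_or_lt with hW | hW
    · simp [l, ← hW]
    · rw [abs_div, abs_of_pos hW, div_le_one hW, abs_mul]; norm_num; linarith
  -- Tilting every weight from `1 / 2` by `l / 2` towards the sign of `r i` yields `l * W / 4`.
  refine ⟨fun i => (1 + l * SignType.sign (r i)) / 2, fun i => ?_, ?_⟩
  · have : |l * SignType.sign (r i)| ≤ 1 := by
      rw [abs_mul]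
      have : |(SignType.sign (r i) : ℝ)| ≤ 1 := by
        rcases lt_trichotomy (r i) 0 with h | h | h <;> simp [h]
      nlinarith [abs_nonneg l, abs_nonneg (SignType.sign (r i) : ℝ)]
    constructor <;> linarith [abs_le.1 this]
  · have hsum : ∑ i ∈ A, (1 + l * SignType.sign (r i)) / 2 / 2 * r i
        = (∑ i ∈ A, r i) / 4 + l / 4 * W := by
      simp only [W, Finset.sum_div, Finset.mul_sum, ← sign_mul_self, ← Finset.sum_add_distrib]
      exact Finset.sum_congr rfl fun i _ => by ring
    rw [hsum, hr]
    rcases eq_or_ne W 0 with hW | hW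
    · rw [hW] at ha ⊢; simp at ha; simp [ha]
    · simp only [l]; field_simp; ring

lemma exists_nat_abs_sub_mul_le {m r R : ℝ} (hmr : 0 < m * r) (hR : |r| ≤ 2 * R) :
    ∃ n : ℕ, |m - n * r| ≤ R := by
  wlog hr : 0 < r generalizing m r
  · obtain ⟨n, hn⟩ := this (m := -m) (r := -r) (by linarith) (by rwa [abs_neg])
      (neg_pos.2 ((not_lt.1 hr).lt_of_ne (by rintro rfl; simp at hmr)))
    exact ⟨n, by rwa [show -m - n * -r = -(m - n * r) by ring, abs_neg] at hn⟩
  have hm : 0 < m := pos_of_mul_pos_left hmr hr.le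
  rw [abs_of_pos hr] at hR
  rcases le_or_gt m R with hmR | hRm
  · exact ⟨0, by simpa [abs_of_pos hm] using hmR⟩
  · refine ⟨⌈(m - R) / r⌉₊, abs_le.2 ⟨?_, ?_⟩⟩
    · have := Nat.ceil_lt_add_one (div_nonneg (sub_nonneg.2 hRm.le) hr.le)
      have := (lt_div_iff₀ hr).1 (by linarith : (⌈(m - R) / r⌉₊ : ℝ) - 1 < (m - R) / r)
      linarith
    · have := (div_le_iff₀ hr).1 (Nat.le_ceil ((m - R) / r))
      linarith

lemma exists_nat_sub_sum_half_mul_eq_zero (hr : ∑ i ∈ A, r i = 0) {c t : ι → ℝ}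
    (hc : ∀ i ∈ A, 0 ≤ c i) (ht : ∀ i ∈ A, t i ∈ Set.Icc (0 : ℝ) 1) :
    ∃ n : ι → ℕ, (∀ i, c i = 0 → n i = 0) ∧ ∃ s : ι → ℝ, (∀ i, s i ∈ Set.Icc (0 : ℝ) 1) ∧
      ∑ i ∈ A, (c i - n i - t i / 2 - s i / 2) * r i = 0 := by
  set W := ∑ i ∈ A, |r i|
  set b := ∑ i ∈ A, t i / 2 * r i
  set m := ∑ i ∈ A, c i * r i - b
  suffices ∃ n : ι → ℕ, (∀ i, c i = 0 → n i = 0) ∧ |m - ∑ i ∈ A, n i * r i| ≤ W / 4 by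
    obtain ⟨n, hn, hmn⟩ := this
    obtain ⟨s, hs, hsum⟩ := exists_sum_half_mul_eq hr hmn
    refine ⟨n, hn, s, hs, ?_⟩
    simp only [sub_mul, Finset.sum_sub_distrib, hsum, m, b]
    ring
  by_cases hm : |m| ≤ W / 4
  · exact ⟨0, fun _ _ => rfl, by simpa using hm⟩
  have hb : |b| ≤ W / 4 := abs_sum_half_mul_le hr ht
  -- `m` and `m + b = ∑ c i * r i` have the same sign, so some `c j * r j` has the sign of `m`.
  have hγ : ∑ i ∈ A, (0 : ℝ) < ∑ i ∈ A, m * (c i * r i) := by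
    rw [← Finset.mul_sum, show ∑ i ∈ A, c i * r i = m + b by ring, Finset.sum_const_zero]
    nlinarith [abs_nonneg b, abs_mul_abs_self m, neg_abs_le (m * b), abs_mul m b]
  obtain ⟨j, hj, hmcr⟩ := Finset.exists_lt_of_sum_lt hγ
  have hcj : 0 < c j := (hc j hj).lt_of_ne (by rintro h; simp [← h] at hmcr)
  have hmr : 0 < m * r j := pos_of_mul_pos_right (by linarith : 0 < c j * (m * r j)) hcj.le
  obtain ⟨n₀, hn₀⟩ := exists_nat_abs_sub_mul_le hmr (R := W / 4)
    (by linarith [abs_le_sum_abs_div_two hr hj])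
  refine ⟨Pi.single j n₀, fun i hi => Pi.single_eq_of_ne (by rintro rfl; linarith) _, ?_⟩
  simpa [Pi.single_apply, hj] using hn₀

end Line

section Zonotope

variable {ι E : Type*} [Fintype ι] [AddCommGroup E] [Module ℝ E] (β : ι → E)

/-- The paper's `∇ = ½ ∑ [0, β i]`. -/
def halfZonotope : Set E := (2⁻¹ : ℝ) • ∑ i, segment ℝ 0 (β i)

lemma mem_halfZonotope_iff {x : E} : x ∈ halfZonotope β ↔
    ∃ t : ι → ℝ, (∀ i, t i ∈ Set.Icc (0 : ℝ) 1) ∧ x = ∑ i, (t i / 2) • β i := by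
  have hseg : ∀ i y, y ∈ segment ℝ 0 (β i) ↔ ∃ t ∈ Set.Icc (0 : ℝ) 1, t • β i = y := by
    simp [segment_eq_image]
  simp only [halfZonotope, Set.mem_smul_set, Set.mem_fintype_sum, hseg]
  constructor
  · rintro ⟨_, ⟨g, hg, rfl⟩, rfl⟩
    choose t ht hgt using hg
    refine ⟨t, ht, ?_⟩
    simp only [Finset.smul_sum, ← hgt, smul_smul, div_eq_inv_mul]
  · rintro ⟨t, ht, rfl⟩
    refine ⟨_, ⟨fun i => t i • β i, fun i => ⟨t i, ht i, rfl⟩, rfl⟩, ?_⟩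
    simp only [Finset.smul_sum, smul_smul, div_eq_inv_mul]

lemma neg_mem_halfZonotope (hβ : ∑ i, β i = 0) {x : E} (hx : x ∈ halfZonotope β) :
    -x ∈ halfZonotope β := by
  obtain ⟨t, ht, rfl⟩ := (mem_halfZonotope_iff β).1 hx
  refine (mem_halfZonotope_iff β).2 ⟨fun i => 1 - t i, fun i => ⟨?_, ?_⟩, ?_⟩
  · linarith [(ht i).2]
  · linarith [(ht i).1]
  · have : ∑ i, ((1 - t i) / 2) • β i = (2⁻¹ : ℝ) • ∑ i, β i - ∑ i, (t i / 2) • β i := by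
      simp only [Finset.smul_sum, ← Finset.sum_sub_distrib, ← sub_smul]
      exact Finset.sum_congr rfl fun i _ => by ring_nf
    rw [this, hβ, smul_zero, zero_sub]

lemma sum_smul_eq_of_eq_sub_indicator (I : Finset ι) {v w m : ι → ℝ}
    (h : ∀ i, w i = v i - (if i ∈ I then 1 else 0) - m i) :
    ∑ i, w i • β i = ∑ i, v i • β i - ∑ i ∈ I, β i - ∑ i, m i • β i := by
  simp only [h, sub_smul, Finset.sum_sub_distrib, ite_smul, one_smul, zero_smul,
    Finset.sum_ite_mem, Finset.univ_inter]

lemma sum_filter_span_eq_zero (hβ0 : ∀ i, β i ≠ 0)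
    (hqs : ∀ L : Submodule ℝ E, Module.finrank ℝ L = 1 →
      ∑ i ∈ Finset.univ.filter (fun i => β i ∈ L), β i = 0)
    (L : Submodule ℝ E) :
    ∑ j ∈ Finset.univ.filter (fun j => ℝ ∙ β j = L), β j = 0 := by
  by_cases hL : ∃ i, ℝ ∙ β i = L
  · obtain ⟨i, rfl⟩ := hL
    convert hqs _ (finrank_span_singleton (hβ0 i)) using 2
    ext j
    simp only [Finset.mem_filter, Finset.mem_univ, true_and]
    refine ⟨fun h => h ▸ Submodule.mem_span_singleton_self _, fun hj => ?_⟩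
    obtain ⟨a, ha⟩ := Submodule.mem_span_singleton.1 hj
    have ha0 : a ≠ 0 := by rintro rfl; exact hβ0 j (by rw [← ha, zero_smul])
    rw [← ha, Submodule.span_singleton_smul_eq (IsUnit.mk0 a ha0)]
  · exact Finset.sum_eq_zero fun j hj => absurd ⟨j, (Finset.mem_filter.1 hj).2⟩ hL

lemma exists_nat_sub_sum_fiber_eq_zero (hβ0 : ∀ i, β i ≠ 0) (L : Submodule ℝ E)
    (hL : ∑ j ∈ Finset.univ.filter (fun j => ℝ ∙ β j = L), β j = 0)
    {c t : ι → ℝ} (hc : ∀ i, 0 ≤ c i) (ht : ∀ i, t i ∈ Set.Icc (0 : ℝ) 1) :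
    ∃ n : ι → ℕ, (∀ i, c i = 0 → n i = 0) ∧ ∃ s : ι → ℝ, (∀ i, s i ∈ Set.Icc (0 : ℝ) 1) ∧
      ∑ j ∈ Finset.univ.filter (fun j => ℝ ∙ β j = L),
        (c j - n j - t j / 2 - s j / 2) • β j = 0 := by
  set A := Finset.univ.filter (fun j => ℝ ∙ β j = L)
  rcases A.eq_empty_or_nonempty with hA | ⟨i₀, hi₀⟩
  · exact ⟨0, fun _ _ => rfl, 0, fun _ => by simp, by rw [hA, Finset.sum_empty]⟩
  have hcoord : ∀ j, ∃ a : ℝ, j ∈ A → a • β i₀ = β j := fun j => by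
    by_cases hj : j ∈ A
    · have : β j ∈ ℝ ∙ β i₀ := by
        rw [(Finset.mem_filter.1 hi₀).2, ← (Finset.mem_filter.1 hj).2]
        exact Submodule.mem_span_singleton_self _
      obtain ⟨a, ha⟩ := Submodule.mem_span_singleton.1 this
      exact ⟨a, fun _ => ha⟩
    · exact ⟨0, fun h => absurd h hj⟩
  choose r hr using hcoord
  have hsmul : ∀ x : ι → ℝ, ∑ j ∈ A, x j • β j = (∑ j ∈ A, x j * r j) • β i₀ := fun x => by
    rw [Finset.sum_smul]
    exact Finset.sum_congr rfl fun j hj => by rw [← hr j hj, smul_smul]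
  have hr0 : ∑ j ∈ A, r j = 0 := by
    have := hsmul 1
    simp only [Pi.one_apply, one_smul, one_mul, hL] at this
    exact (smul_eq_zero.1 this.symm).resolve_right (hβ0 i₀)
  obtain ⟨n, hn, s, hs, hsum⟩ :=
    exists_nat_sub_sum_half_mul_eq_zero hr0 (fun i _ => hc i) (fun i _ => ht i)
  exact ⟨n, hn, s, hs, by rw [hsmul, hsum, zero_smul]⟩

lemma exists_nat_sub_mem_halfZonotope (hβ0 : ∀ i, β i ≠ 0)
    (hfib : ∀ L : Submodule ℝ E, ∑ j ∈ Finset.univ.filter (fun j => ℝ ∙ β j = L), β j = 0)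
    {c : ι → ℝ} (hc : ∀ i, 0 ≤ c i) {z : E} (hz : z ∈ halfZonotope β) :
    ∃ n : ι → ℕ, (∀ i, c i = 0 → n i = 0) ∧
      ∑ i, (c i - n i) • β i - z ∈ halfZonotope β := by
  obtain ⟨t, ht, rfl⟩ := (mem_halfZonotope_iff β).1 hz
  choose n hn s hs hsum using fun L => exists_nat_sub_sum_fiber_eq_zero β hβ0 L (hfib L) hc ht
  refine ⟨fun j => n (ℝ ∙ β j) j, fun j => hn _ j,
    (mem_halfZonotope_iff β).2 ⟨fun j => s (ℝ ∙ β j) j, fun j => hs _ j, ?_⟩⟩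
  rw [← sub_eq_zero]
  simp only [← Finset.sum_sub_distrib, ← sub_smul]
  refine Finset.sum_eq_zero_of_sum_fiber_eq_zero (fun j => ℝ ∙ β j) _ fun L => ?_
  rw [← hsum L]
  exact Finset.sum_congr rfl fun j hj => by rw [(Finset.mem_filter.1 hj).2]

lemma exists_nonneg_shift_of_sub_mem_halfZonotope (hβ : ∑ i, β i = 0) {I : Finset ι}
    {v w : ι → ℤ} {δ : E} (hw : ∑ i, (w i : ℝ) • β i - δ ∈ halfZonotope β)
    (hwI : ∀ i ∈ I, w i < v i) (hwO : ∀ i ∉ I, w i = v i) :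
    ∃ c : ι → ℝ, (∀ i, 0 ≤ c i) ∧ (∀ i, i ∉ I → c i = 0) ∧ ∃ z ∈ halfZonotope β,
      δ = ∑ i, (v i : ℝ) • β i - ∑ i ∈ I, β i - ∑ i, c i • β i + z := by
  set c : ι → ℝ := fun i => if i ∈ I then v i - w i - 1 else 0
  have hshift : ∑ i, (w i : ℝ) • β i = ∑ i, (v i : ℝ) • β i - ∑ i ∈ I, β i - ∑ i, c i • β i :=
    sum_smul_eq_of_eq_sub_indicator β I fun i => by
      by_cases hi : i ∈ I
      · simp only [c, if_pos hi]; ring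
      · simp [c, hi, hwO i hi]
  refine ⟨c, fun i => ?_, fun i hi => if_neg hi, _, neg_mem_halfZonotope β hβ hw, ?_⟩
  · by_cases hi : i ∈ I
    · have : (w i : ℝ) + 1 ≤ v i := by exact_mod_cast hwI i hi
      simp only [c, if_pos hi]
      linarith
    · simp [c, hi]
  · rw [hshift]
    abel

lemma exists_int_sub_mem_halfZonotope_of_nonneg_shift (hβ0 : ∀ i, β i ≠ 0)
    (hfib : ∀ L : Submodule ℝ E, ∑ j ∈ Finset.univ.filter (fun j => ℝ ∙ β j = L), β j = 0)
    {I : Finset ι} {v : ι → ℤ} {c : ι → ℝ} (hc : ∀ i, 0 ≤ c i) (hcI : ∀ i, i ∉ I → c i = 0)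
    {z : E} (hz : z ∈ halfZonotope β) :
    ∃ w : ι → ℤ, ∑ i, (w i : ℝ) • β i -
        (∑ i, (v i : ℝ) • β i - ∑ i ∈ I, β i - ∑ i, c i • β i + z) ∈ halfZonotope β ∧
      (∀ i ∈ I, w i < v i) ∧ (∀ i ∉ I, w i = v i) := by
  obtain ⟨n, hn, hmem⟩ := exists_nat_sub_mem_halfZonotope β hβ0 hfib hc hz
  set w : ι → ℤ := fun i => if i ∈ I then v i - 1 - n i else v i
  have hshift : ∑ i, (w i : ℝ) • β i =
      ∑ i, (v i : ℝ) • β i - ∑ i ∈ I, β i - ∑ i, (n i : ℝ) • β i :=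
    sum_smul_eq_of_eq_sub_indicator β I fun i => by
      by_cases hi : i ∈ I
      · simp only [w, if_pos hi]; push_cast; ring
      · simp [w, hi, hn i (hcI i hi)]
  refine ⟨w, ?_, fun i hi => by simp only [w, if_pos hi]; omega, fun i hi => if_neg hi⟩
  convert hmem using 1
  rw [hshift]
  simp only [sub_smul, Finset.sum_sub_distrib]
  abel

end Zonotope

theorem window_membership_iff_shift_in_AI
    {N k : ℕ}
    (μ : (Fin N → ℝ) →ₗ[ℝ] (Fin k → ℝ))
    (β : Fin N → (Fin k → ℝ)) (hβ : ∀ i, β i = μ (Pi.single i 1))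
    (hβ0 : ∀ i, β i ≠ 0)
    -- quasi-symmetry
    (hqs : ∀ L : Submodule ℝ (Fin k → ℝ), Module.finrank ℝ L = 1 →
      ∑ i ∈ Finset.univ.filter (fun i => β i ∈ L), β i = 0)
    (δ : Fin k → ℝ) (v : Fin N → ℤ) (I : Finset (Fin N)) :
    (∃ w : Fin N → ℤ,
        μ (fun i => (w i : ℝ)) - δ ∈ (2⁻¹ : ℝ) • ∑ i : Fin N, segment ℝ 0 (β i) ∧
        (∀ i ∈ I, w i < v i) ∧ (∀ i ∉ I, w i = v i)) ↔
      (∃ c : Fin N → ℝ, (∀ i, 0 ≤ c i) ∧ (∀ i, i ∉ I → c i = 0) ∧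
        ∃ nn ∈ (2⁻¹ : ℝ) • ∑ i : Fin N, segment ℝ 0 (β i),
          δ = μ (fun i => (v i : ℝ)) - (∑ i ∈ I, β i) - (∑ i, c i • β i) + nn) := by
  obtain rfl : μ = Fintype.linearCombination ℝ β := LinearMap.pi_ext fun i x => by
    rw [Fintype.linearCombination_apply_single, hβ, ← map_smul, ← Pi.single_smul, smul_eq_mul,
      mul_one]
  have hfib := sum_filter_span_eq_zero β hβ0 hqs
  simp only [Fintype.linearCombination_apply]
  constructor
  · rintro ⟨w, hw, hwI, hwO⟩
    exact exists_nonneg_shift_of_sub_mem_halfZonotope β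
      (Finset.sum_eq_zero_of_sum_fiber_eq_zero _ _ hfib) hw hwI hwO
  · rintro ⟨c, hc, hcI, z, hz, rfl⟩
    exact exists_int_sub_mem_halfZonotope_of_nonneg_shift β hβ0 hfib hc hcI hz
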